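/- Let M ≥ 2, m > 0, θ > 0, u ∈ ℝ³, and let f(ξ) = Σ_{|α|≤M} f_α ℋ_{θ,α}((ξ−u)/√θ) be a truncated Hermite expansion. Define ρ := m ∫_{ℝ³} f(ξ) dξ, and assume ρ u_i = m ∫_{ℝ³} ξ_i f(ξ) dξ for i = 1,2,3 and ρ|u|² + 3ρθ = m ∫_{ℝ³} |ξ|² f(ξ) dξ. Then for all i, j ∈ {1,2,3}, the stress tensor σ_{ij} := m ∫_{ℝ³} (ξ_i − u_i)(ξ_j − u_j) f(ξ) dξ − ρ θ δ_{ij} satisfies σ_{ij} = (1 + δ_{ij}) f_{e_i + e_j}. -/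

import Mathlib

open MeasureTheory Real

/-- Probabilists' Hermite polynomial `He n` evaluated at `x`. -/
noncomputable def He (n : ℕ) (x : ℝ) : ℝ :=
  (-1 : ℝ) ^ n * Real.exp (x ^ 2 / 2) *
    iteratedDeriv n (fun y : ℝ => Real.exp (-(y ^ 2) / 2)) x

/-- The basis function `ℋ_{θ,α}` with particle mass `m`. -/
noncomputable def Hbasis (m θ : ℝ) (α : Fin 3 → ℕ) (v : Fin 3 → ℝ) : ℝ :=
  (m * (2 * Real.pi * θ) ^ ((3 : ℝ) / 2) * θ ^ (((∑ d, α d : ℕ) : ℝ) / 2))⁻¹ *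
    ∏ d, (He (α d) (v d) * Real.exp (-(v d) ^ 2 / 2))

/-- The set of multi-indices `α ∈ ℕ³` with `|α| ≤ M`. -/
def multiIndices (M : ℕ) : Finset (Fin 3 → ℕ) :=
  (Fintype.piFinset fun _ : Fin 3 => Finset.range (M + 1)).filter fun α => ∑ d, α d ≤ M

/-- The truncated Hermite expansion of order `M` with parameters `(u, θ)`
and coefficients `c`. -/
noncomputable def truncExp (M : ℕ) (m θ : ℝ) (u : Fin 3 → ℝ)
    (c : (Fin 3 → ℕ) → ℝ) (ξ : Fin 3 → ℝ) : ℝ :=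
  ∑ α ∈ multiIndices M, c α * Hbasis m θ α (fun d => (ξ d - u d) / Real.sqrt θ)

/-!
Write `v = (ξ - u) / √θ` and `He_β(v) = ∏_d He_{β_d}(v_d)`. Integration by parts against
`e^{-x²/2}` gives `∫ p He_{n+1} e^{-x²/2} = ∫ p' He_n e^{-x²/2}`, hence the orthogonality
`∫ He_k He_n e^{-x²/2} = δ_{kn} n! √(2π)`. Factorising the integral over `ℝ³`, `He_β(v)` is
orthogonal to every `ℋ_{θ,α}(v)` with `α ≠ β`, so `m ∫ He_β(v) f = β! f_β / θ^{|β|/2}`.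
Since `(ξ_i - u_i)(ξ_j - u_j) = θ (He_{e_i+e_j}(v) + δ_{ij})`, the second moment is
`(1 + δ_{ij}) f_{e_i+e_j} + δ_{ij} θ f_0`, and `ρ = f_0` cancels the last term.
-/

open Polynomial
open scoped Nat

namespace Polynomial

theorem derivative_hermite_succ (n : ℕ) :
    derivative (hermite (n + 1)) = (n + 1) • hermite n := by
  induction n with
  | zero => simp [hermite_zero]
  | succ n ih =>
    rw [hermite_succ (n + 1), derivative_sub, derivative_mul, derivative_X, one_mul, ih,
      derivative_smul, mul_smul_comm, add_sub_assoc, ← smul_sub, ← hermite_succ]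
    module

end Polynomial

section GaussianIntegral

variable {R : Type*} [CommRing R] [Algebra R ℝ]

lemma integrable_aeval_mul_gaussian (p : R[X]) :
    Integrable fun x : ℝ => aeval x p * exp (-(x ^ 2 / 2)) := by
  induction p using Polynomial.induction_on' with
  | add p q hp hq =>
    simp only [map_add, add_mul]
    exact hp.add hq
  | monomial n a =>
    have h := integrable_rpow_mul_exp_neg_mul_sq (b := 1 / 2) (by norm_num)
      (s := n) (by linarith [(n.cast_nonneg : (0 : ℝ) ≤ n)])
    refine (h.const_mul (algebraMap R ℝ a)).congr (.of_forall fun x => ?_)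
    simp only [aeval_monomial, rpow_natCast]
    ring_nf

variable (R) in
noncomputable def gaussianIntegral : R[X] →+ ℝ where
  toFun p := ∫ x, aeval x p * exp (-(x ^ 2 / 2))
  map_zero' := by simp
  map_add' p q := by
    simp only [map_add, add_mul]
    exact integral_add (integrable_aeval_mul_gaussian p) (integrable_aeval_mul_gaussian q)

lemma gaussianIntegral_apply (p : R[X]) :
    gaussianIntegral R p = ∫ x, aeval x p * exp (-(x ^ 2 / 2)) := rfl

lemma gaussianIntegral_one : gaussianIntegral R 1 = √(2 * π) := by
  have h := integral_gaussian (1 / 2)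
  rw [show π / (1 / 2) = 2 * π by ring] at h
  rw [gaussianIntegral_apply, ← h]
  congr 1 with x
  simp only [map_one, one_mul]
  ring_nf

lemma gaussianIntegral_derivative (p : R[X]) :
    gaussianIntegral R (derivative p) = gaussianIntegral R (X * p) := by
  have hexp (x : ℝ) : HasDerivAt (fun y => exp (-(y ^ 2 / 2))) (-x * exp (-(x ^ 2 / 2))) x := by
    have h : HasDerivAt (fun y : ℝ => -(y ^ 2 / 2)) (-x) x := by
      have h := ((hasDerivAt_pow 2 x).div_const 2).neg
      simp only [Nat.cast_ofNat, Nat.add_one_sub_one, pow_one, ne_eq, OfNat.ofNat_ne_zero,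
        not_false_eq_true, mul_div_cancel_left₀] at h
      exact h
    simpa [mul_comm] using h.exp
  have hXp : (fun x : ℝ => aeval x p * (-x * exp (-(x ^ 2 / 2))))
      = fun x => -(aeval x (X * p) * exp (-(x ^ 2 / 2))) := by
    ext x
    simp only [map_mul, aeval_X]
    ring
  have hint : Integrable fun x : ℝ => aeval x p * (-x * exp (-(x ^ 2 / 2))) := by
    rw [hXp]
    exact (integrable_aeval_mul_gaussian (X * p)).neg
  have ibp := integral_mul_deriv_eq_deriv_mul_of_integrable
    (fun x _ => p.hasDerivAt_aeval x) (fun x _ => hexp x) hint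
    (integrable_aeval_mul_gaussian _) (integrable_aeval_mul_gaussian p)
  rw [hXp, integral_neg, neg_inj] at ibp
  rw [gaussianIntegral_apply, gaussianIntegral_apply, ibp]

lemma gaussianIntegral_mul_hermite_succ (p : ℤ[X]) (n : ℕ) :
    gaussianIntegral ℤ (p * hermite (n + 1))
      = gaussianIntegral ℤ (derivative p * hermite n) := by
  have h := gaussianIntegral_derivative (p * hermite n)
  rw [derivative_mul, map_add] at h
  rw [hermite_succ, mul_sub, map_sub, mul_left_comm, ← h]
  ring

theorem gaussianIntegral_hermite_mul_hermite (k n : ℕ) :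
    gaussianIntegral ℤ (hermite k * hermite n) = if k = n then n ! * √(2 * π) else 0 := by
  induction n generalizing k with
  | zero =>
    cases k with
    | zero => simp [hermite_zero, gaussianIntegral_one]
    | succ k =>
      rw [hermite_zero, map_one, mul_one, ← one_mul (hermite (k + 1)),
        gaussianIntegral_mul_hermite_succ]
      norm_num
  | succ n ih =>
    rw [gaussianIntegral_mul_hermite_succ]
    cases k with
    | zero => simp [hermite_zero]
    | succ k =>
      rw [derivative_hermite_succ, smul_mul_assoc, map_nsmul, ih, nsmul_eq_mul]
      split_ifs <;> simp_all [Nat.factorial_succ]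
      ring

end GaussianIntegral

lemma He_eq_aeval_hermite (n : ℕ) (x : ℝ) : He n x = aeval x (hermite n) := by
  rw [hermite_eq_deriv_gaussian', He, iteratedDeriv_eq_iterate]
  simp only [neg_div]
  ring

lemma He_mul_He_mul_exp (k n : ℕ) (x : ℝ) :
    He k x * (He n x * exp (-x ^ 2 / 2))
      = aeval x (hermite k * hermite n) * exp (-(x ^ 2 / 2)) := by
  rw [He_eq_aeval_hermite, He_eq_aeval_hermite, map_mul, neg_div]
  ring

lemma integrable_He_mul_He_mul_exp (k n : ℕ) :
    Integrable fun x => He k x * (He n x * exp (-x ^ 2 / 2)) := by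
  simpa only [He_mul_He_mul_exp] using integrable_aeval_mul_gaussian (hermite k * hermite n)

theorem integral_He_mul_He_mul_exp (k n : ℕ) :
    ∫ x, He k x * (He n x * exp (-x ^ 2 / 2)) = if k = n then n ! * √(2 * π) else 0 := by
  simp only [He_mul_He_mul_exp, ← gaussianIntegral_apply, gaussianIntegral_hermite_mul_hermite]

lemma He_zero (x : ℝ) : He 0 x = 1 := by simp [He_eq_aeval_hermite, hermite_zero]

lemma He_one (x : ℝ) : He 1 x = x := by simp [He_eq_aeval_hermite]

lemma He_two (x : ℝ) : He 2 x = x ^ 2 - 1 := by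
  simp [He_eq_aeval_hermite, hermite_succ]
  ring

section MultiIndex

variable {ι : Type*} [Fintype ι]

noncomputable def multiHe (β : ι → ℕ) (v : ι → ℝ) : ℝ := ∏ d, He (β d) (v d)

lemma multiHe_zero (v : ι → ℝ) : multiHe 0 v = 1 := by
  simp [multiHe, He_zero]

lemma prod_apply_single_add_single [DecidableEq ι] {N : Type*} [CommMonoid N] (g : ι → ℕ → N)
    (hg : ∀ d, g d 0 = 1) (i j : ι) :
    ∏ d, g d ((Pi.single i 1 + Pi.single j 1 : ι → ℕ) d)
      = if i = j then g i 2 else g i 1 * g j 1 := by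
  split_ifs with hij
  · subst hij
    rw [Fintype.prod_eq_single i fun d hd => by simp [hd, hg]]
    simp
  · rw [Fintype.prod_eq_mul i j hij fun d hd => by simp [hd.1, hd.2, hg]]
    simp [hij, Ne.symm hij]

lemma multiHe_single_add_single [DecidableEq ι] (i j : ι) (v : ι → ℝ) :
    multiHe (Pi.single i 1 + Pi.single j 1) v = v i * v j - if i = j then 1 else 0 := by
  rw [multiHe, prod_apply_single_add_single (fun d n => He n (v d)) (fun d => He_zero _)]
  split_ifs with hij
  · subst hij; rw [He_two]; ring
  · rw [He_one, He_one]; ring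

lemma prod_factorial_single_add_single [DecidableEq ι] (i j : ι) :
    ∏ d, (((Pi.single i 1 + Pi.single j 1 : ι → ℕ) d)! : ℝ) = 1 + if i = j then 1 else 0 := by
  rw [prod_apply_single_add_single (fun _ n => (n ! : ℝ)) (fun _ => by simp)]
  split_ifs <;> norm_num [Nat.factorial]

lemma mem_multiIndices {M : ℕ} {β : Fin 3 → ℕ} : β ∈ multiIndices M ↔ ∑ d, β d ≤ M := by
  rw [multiIndices, Finset.mem_filter, and_iff_right_iff_imp, Fintype.mem_piFinset]
  intro h d
  exact Finset.mem_range_succ_iff.2 ((Finset.single_le_sum (fun _ _ => Nat.zero_le _)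
    (Finset.mem_univ d)).trans h)

end MultiIndex

section ChangeOfVariables

lemma sub_div_eq_inv_smul_sub {ι : Type*} (ξ u : ι → ℝ) (s : ℝ) :
    (fun d => (ξ d - u d) / s) = s⁻¹ • (ξ - u) := by
  ext d
  simp [div_eq_inv_mul]

variable {ι : Type*} [Fintype ι]

lemma integral_comp_sub_div (g : (ι → ℝ) → ℝ) (u : ι → ℝ) {s : ℝ} (hs : 0 ≤ s) :
    ∫ ξ : ι → ℝ, g (fun d => (ξ d - u d) / s) = s ^ Fintype.card ι * ∫ v, g v := by
  simp only [sub_div_eq_inv_smul_sub]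
  rw [integral_sub_right_eq_self (fun ξ => g (s⁻¹ • ξ)) u,
    Measure.integral_comp_inv_smul_of_nonneg volume g hs, Module.finrank_fintype_fun_eq_card,
    smul_eq_mul]

lemma MeasureTheory.Integrable.comp_sub_div {g : (ι → ℝ) → ℝ} (hg : Integrable g) (u : ι → ℝ)
    {s : ℝ} (hs : s ≠ 0) : Integrable fun ξ : ι → ℝ => g (fun d => (ξ d - u d) / s) := by
  simp only [sub_div_eq_inv_smul_sub]
  exact (hg.comp_smul (inv_ne_zero hs)).comp_sub_right u

end ChangeOfVariables

section Orthogonality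

variable {M : ℕ} {m θ : ℝ}

lemma multiHe_mul_Hbasis (α β : Fin 3 → ℕ) (v : Fin 3 → ℝ) :
    multiHe β v * Hbasis m θ α v
      = (m * (2 * π * θ) ^ ((3 : ℝ) / 2) * θ ^ (((∑ d, α d : ℕ) : ℝ) / 2))⁻¹ *
        ∏ d, He (β d) (v d) * (He (α d) (v d) * exp (-(v d) ^ 2 / 2)) := by
  rw [multiHe, Hbasis, mul_left_comm, ← Finset.prod_mul_distrib]

lemma integrable_multiHe_mul_Hbasis (α β : Fin 3 → ℕ) :
    Integrable fun v => multiHe β v * Hbasis m θ α v := by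
  simp only [multiHe_mul_Hbasis]
  exact (Integrable.fintype_prod fun d => integrable_He_mul_He_mul_exp (β d) (α d)).const_mul _

theorem integral_multiHe_mul_Hbasis (α β : Fin 3 → ℕ) :
    ∫ v, multiHe β v * Hbasis m θ α v
      = if α = β then (∏ d, ((β d)! : ℝ)) * √(2 * π) ^ 3 *
          (m * (2 * π * θ) ^ ((3 : ℝ) / 2) * θ ^ (((∑ d, β d : ℕ) : ℝ) / 2))⁻¹ else 0 := by
  simp only [multiHe_mul_Hbasis, integral_const_mul]
  rw [integral_fintype_prod_volume_eq_prod
    (fun d x => He (β d) x * (He (α d) x * exp (-x ^ 2 / 2)))]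
  simp only [integral_He_mul_He_mul_exp]
  by_cases hαβ : α = β
  · subst hαβ
    simp only [if_true, Finset.prod_mul_distrib, Finset.prod_const, Finset.card_univ,
      Fintype.card_fin]
    ring
  · obtain ⟨d, hd⟩ := Function.ne_iff.1 hαβ
    rw [if_neg hαβ, Finset.prod_eq_zero (Finset.mem_univ d) (if_neg (Ne.symm hd)), mul_zero]

lemma rpow_three_halves_mul {x y : ℝ} (hx : 0 ≤ x) (hy : 0 ≤ y) :
    (x * y) ^ ((3 : ℝ) / 2) = √x ^ 3 * √y ^ 3 := by
  rw [← mul_pow, ← sqrt_mul hx, sqrt_eq_rpow, ← rpow_natCast, ← rpow_mul (by positivity)]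
  norm_num

theorem integral_multiHe_mul_truncExp (hθ : 0 < θ) (u : Fin 3 → ℝ) (c : (Fin 3 → ℕ) → ℝ)
    {β : Fin 3 → ℕ} (hβ : β ∈ multiIndices M) :
    ∫ ξ, multiHe β (fun d => (ξ d - u d) / √θ) * truncExp M m θ u c ξ
      = c β * (∏ d, ((β d)! : ℝ)) / (m * θ ^ (((∑ d, β d : ℕ) : ℝ) / 2)) := by
  have hcov := integral_comp_sub_div
    (fun v => ∑ α ∈ multiIndices M, c α * (multiHe β v * Hbasis m θ α v)) u (sqrt_nonneg θ)
  simp only [truncExp, Finset.mul_sum, mul_left_comm _ (c _)]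
  rw [hcov, integral_finsetSum _ fun α _ => (integrable_multiHe_mul_Hbasis α β).const_mul _]
  simp only [integral_const_mul, integral_multiHe_mul_Hbasis, mul_ite, mul_zero,
    Finset.sum_ite_eq', hβ, if_true, Fintype.card_fin,
    rpow_three_halves_mul (by positivity : (0 : ℝ) ≤ 2 * π) hθ.le]
  rcases eq_or_ne m 0 with rfl | hm
  · simp
  have : 0 < √θ := sqrt_pos.2 hθ
  field_simp

lemma integrable_multiHe_mul_truncExp (hθ : 0 < θ) (u : Fin 3 → ℝ) (c : (Fin 3 → ℕ) → ℝ)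
    (β : Fin 3 → ℕ) :
    Integrable fun ξ => multiHe β (fun d => (ξ d - u d) / √θ) * truncExp M m θ u c ξ := by
  have h := (integrable_finsetSum (multiIndices M) fun α _ =>
    (integrable_multiHe_mul_Hbasis (m := m) (θ := θ) α β).const_mul (c α)).comp_sub_div u
    (sqrt_pos.2 hθ).ne'
  simpa only [truncExp, Finset.mul_sum, mul_left_comm _ (c _)] using h

end Orthogonality

section Moments

variable {M : ℕ} {m θ : ℝ}

lemma integral_truncExp (hθ : 0 < θ) (u : Fin 3 → ℝ) (c : (Fin 3 → ℕ) → ℝ) :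
    ∫ ξ, truncExp M m θ u c ξ = c 0 / m := by
  simpa [multiHe_zero] using
    integral_multiHe_mul_truncExp (m := m) hθ u c (β := 0) (mem_multiIndices.2 (by simp))

lemma mul_integral_mul_truncExp (hM : 2 ≤ M) (hm : m ≠ 0) (hθ : 0 < θ) (u : Fin 3 → ℝ)
    (c : (Fin 3 → ℕ) → ℝ) (i j : Fin 3) :
    m * ∫ ξ, (ξ i - u i) * (ξ j - u j) * truncExp M m θ u c ξ
      = (1 + if i = j then 1 else 0) * c (Pi.single i 1 + Pi.single j 1)
        + (if i = j then 1 else 0) * θ * c 0 := by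
  set β : Fin 3 → ℕ := Pi.single i 1 + Pi.single j 1
  have hβ : ∑ d, β d = 2 := by simp [β, Finset.sum_add_distrib]
  have hsplit (ξ : Fin 3 → ℝ) : (ξ i - u i) * (ξ j - u j) * truncExp M m θ u c ξ
      = θ * (multiHe β (fun d => (ξ d - u d) / √θ) * truncExp M m θ u c ξ
        + (if i = j then 1 else 0) * truncExp M m θ u c ξ) := by
    have : 0 < √θ := sqrt_pos.2 hθ
    rw [multiHe_single_add_single]
    field_simp
    rw [sq_sqrt hθ.le]
    ring
  have hint : Integrable fun ξ => truncExp M m θ u c ξ := by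
    simpa [multiHe_zero] using integrable_multiHe_mul_truncExp (M := M) (m := m) hθ u c 0
  simp only [hsplit, integral_const_mul]
  rw [integral_add (integrable_multiHe_mul_truncExp hθ u c β) (hint.const_mul _),
    integral_const_mul, integral_truncExp hθ,
    integral_multiHe_mul_truncExp hθ u c (mem_multiIndices.2 (hβ ▸ hM)),
    prod_factorial_single_add_single, hβ, Nat.cast_ofNat, div_self two_ne_zero, rpow_one]
  field_simp

end Moments

theorem stmt_6_general (M : ℕ) (hM : 2 ≤ M) (m θ : ℝ) (hm : 0 < m) (hθ : 0 < θ)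
    (u : Fin 3 → ℝ) (c : (Fin 3 → ℕ) → ℝ)
    (ρ : ℝ) (hρ : ρ = m * ∫ ξ : Fin 3 → ℝ, truncExp M m θ u c ξ)
    (i j : Fin 3) (σ : ℝ)
    (hσ : σ = (m * ∫ ξ : Fin 3 → ℝ, (ξ i - u i) * (ξ j - u j) * truncExp M m θ u c ξ) -
      ρ * θ * (if i = j then (1 : ℝ) else 0)) :
    σ = (1 + if i = j then (1 : ℝ) else 0) * c (Pi.single i 1 + Pi.single j 1) := by
  rw [hσ, hρ, mul_integral_mul_truncExp hM hm.ne' hθ, integral_truncExp hθ,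
    mul_div_cancel₀ _ hm.ne']
  ring

theorem stmt_6 (M : ℕ) (hM : 2 ≤ M) (m θ : ℝ) (hm : 0 < m) (hθ : 0 < θ)
    (u : Fin 3 → ℝ) (c : (Fin 3 → ℕ) → ℝ)
    (ρ : ℝ) (hρ : ρ = m * ∫ ξ : Fin 3 → ℝ, truncExp M m θ u c ξ)
    (hu : ∀ i : Fin 3, ρ * u i = m * ∫ ξ : Fin 3 → ℝ, ξ i * truncExp M m θ u c ξ)
    (hθtemp : ρ * (∑ d, u d ^ 2) + 3 * ρ * θ =
      m * ∫ ξ : Fin 3 → ℝ, (∑ d, ξ d ^ 2) * truncExp M m θ u c ξ)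
    (i j : Fin 3) (σ : ℝ)
    (hσ : σ = (m * ∫ ξ : Fin 3 → ℝ, (ξ i - u i) * (ξ j - u j) * truncExp M m θ u c ξ) -
      ρ * θ * (if i = j then (1 : ℝ) else 0)) :
    σ = (1 + if i = j then (1 : ℝ) else 0) * c (Pi.single i 1 + Pi.single j 1) :=
  stmt_6_general M hM m θ hm hθ u c ρ hρ i j σ hσ
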